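/- arXiv:2206.02016 — 2 statements merged into one kernel-verified Lean document; each statement's English description precedes it below -/
import Mathlib

section
/- For every real c > 1 there exist a natural number k, exponents t_1, ..., t_k with 1 ≤ t_1 < t_2 < ... < t_k < c, and nonnegative-order power functions f_1, ..., f_k (each f_i(b) = C_i·b^{s_i} with C_i > 0 and 0 ≤ s_i < c), such that for all b, w ≥ 0: (b+w)^c - b^c - w^c ≤ Σ_{i=1}^{k} f_i(b)·w^{t_i}. -/
/-!
By convexity of `x ↦ x ^ c`, `(b + w) ^ c - b ^ c ≤ c (b + w) ^ (c - 1) w ≤ c 2 ^ (c - 1) b ^ (c - 1) w`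
when `w ≤ b`, and symmetrically when `b ≤ w`. For `c > 2` the two terms `b ^ (c - 1) w` and
`b w ^ (c - 1)` have exponents `1 < c - 1` in `w`. For `c ≤ 2` the exponent `c - 1` is too small,
but `w ^ (c - 1) b ≤ b ^ (c - 1) w` when `b ≤ w`, so the single term `b ^ (c - 1) w` suffices.
-/

open Real

lemma add_rpow_sub_rpow_le {c b w : ℝ} (hc : 1 ≤ c) (hb : 0 ≤ b) (hw : 0 ≤ w) :
    (b + w) ^ c - b ^ c ≤ c * (b + w) ^ (c - 1) * w := by
  rcases hw.eq_or_lt with rfl | hw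
  · simp
  have hslope := (convexOn_rpow hc).slope_le_of_hasDerivAt (x := b) (y := b + w)
    hb (by simp; positivity) (by linarith) (hasDerivAt_rpow_const (Or.inr hc))
  rwa [slope_def_field, add_sub_cancel_left, div_le_iff₀ hw] at hslope

lemma add_rpow_sub_rpow_sub_rpow_le_of_le {c b w : ℝ} (hc : 1 ≤ c) (hw : 0 ≤ w) (hwb : w ≤ b) :
    (b + w) ^ c - b ^ c - w ^ c ≤ c * 2 ^ (c - 1) * b ^ (c - 1) * w := by
  have hb : 0 ≤ b := hw.trans hwb
  have hpow : (b + w) ^ (c - 1) ≤ 2 ^ (c - 1) * b ^ (c - 1) := by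
    rw [← mul_rpow zero_le_two hb]
    exact rpow_le_rpow (by positivity) (by linarith) (by linarith)
  calc (b + w) ^ c - b ^ c - w ^ c ≤ c * (b + w) ^ (c - 1) * w := by
        linarith [add_rpow_sub_rpow_le hc hb hw, rpow_nonneg hw c]
    _ ≤ c * (2 ^ (c - 1) * b ^ (c - 1)) * w := by gcongr
    _ = c * 2 ^ (c - 1) * b ^ (c - 1) * w := by ring

lemma rpow_mul_le_rpow_mul_of_le {p b w : ℝ} (hp : p ≤ 1) (hb : 0 ≤ b) (hbw : b ≤ w) :
    w ^ p * b ≤ b ^ p * w := by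
  have hsplit : ∀ x : ℝ, 0 ≤ x → x = x ^ p * x ^ (1 - p) := fun x hx => by
    rw [← rpow_add' hx (by simp), add_sub_cancel, rpow_one]
  calc w ^ p * b = w ^ p * b ^ p * b ^ (1 - p) := by rw [mul_assoc, ← hsplit b hb]
    _ ≤ w ^ p * b ^ p * w ^ (1 - p) :=
      mul_le_mul_of_nonneg_left (rpow_le_rpow hb hbw (by linarith))
        (mul_nonneg (rpow_nonneg (hb.trans hbw) p) (rpow_nonneg hb p))
    _ = b ^ p * w := by rw [mul_comm (w ^ p), mul_assoc, ← hsplit w (hb.trans hbw)]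

lemma add_rpow_sub_rpow_sub_rpow_le {c b w : ℝ} (hc : 1 ≤ c) (hb : 0 ≤ b) (hw : 0 ≤ w) :
    (b + w) ^ c - b ^ c - w ^ c ≤
      c * 2 ^ (c - 1) * b ^ (c - 1) * w + c * 2 ^ (c - 1) * b * w ^ (c - 1) := by
  rcases le_total w b with hwb | hbw
  · have := add_rpow_sub_rpow_sub_rpow_le_of_le hc hw hwb
    have : 0 ≤ c * 2 ^ (c - 1) * b * w ^ (c - 1) := by positivity
    linarith
  · have := add_rpow_sub_rpow_sub_rpow_le_of_le hc hb hbw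
    have : 0 ≤ c * 2 ^ (c - 1) * b ^ (c - 1) * w := by positivity
    rw [add_comm w] at *
    linarith

lemma add_rpow_sub_rpow_sub_rpow_le_of_le_two {c b w : ℝ} (hc₁ : 1 ≤ c) (hc₂ : c ≤ 2)
    (hb : 0 ≤ b) (hw : 0 ≤ w) :
    (b + w) ^ c - b ^ c - w ^ c ≤ c * 2 ^ (c - 1) * b ^ (c - 1) * w := by
  rcases le_total w b with hwb | hbw
  · exact add_rpow_sub_rpow_sub_rpow_le_of_le hc₁ hw hwb
  · have h := add_rpow_sub_rpow_sub_rpow_le_of_le hc₁ hb hbw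
    have hswap := rpow_mul_le_rpow_mul_of_le (p := c - 1) (by linarith) hb hbw
    rw [add_comm w] at h
    calc (b + w) ^ c - b ^ c - w ^ c ≤ c * 2 ^ (c - 1) * w ^ (c - 1) * b := by linarith
      _ = c * 2 ^ (c - 1) * (w ^ (c - 1) * b) := by ring
      _ ≤ c * 2 ^ (c - 1) * (b ^ (c - 1) * w) := by gcongr
      _ = c * 2 ^ (c - 1) * b ^ (c - 1) * w := by ring

/-- For every real `c > 1` there exist `k : ℕ`, exponents `t 1 < ... < t k` in `[1, c)`,
and power functions `f i b = C i * b ^ s i` with `C i > 0` and `0 ≤ s i < c`, such that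
`(b+w)^c - b^c - w^c ≤ ∑ i, C i * b ^ s i * w ^ t i` for all `b, w ≥ 0`. -/
theorem stmt_1 (c : ℝ) (hc : 1 < c) :
    ∃ (k : ℕ) (t C s : Fin k → ℝ),
      StrictMono t ∧
      (∀ i, 1 ≤ t i ∧ t i < c) ∧
      (∀ i, 0 < C i) ∧
      (∀ i, 0 ≤ s i ∧ s i < c) ∧
      ∀ b w : ℝ, 0 ≤ b → 0 ≤ w →
        (b + w) ^ c - b ^ c - w ^ c ≤ ∑ i, C i * b ^ s i * w ^ t i := by
  have hK : 0 < c * 2 ^ (c - 1) := by positivity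
  rcases le_or_gt c 2 with hc₂ | hc₂
  · refine ⟨1, ![1], ![c * 2 ^ (c - 1)], ![c - 1], Subsingleton.strictMono _,
      ?_, ?_, ?_, fun b w hb hw => ?_⟩
    · intro i; fin_cases i; simp; linarith
    · intro i; fin_cases i; simpa using hK
    · intro i; fin_cases i; simp; linarith
    · simpa using add_rpow_sub_rpow_sub_rpow_le_of_le_two hc.le hc₂ hb hw
  · refine ⟨2, ![1, c - 1], ![c * 2 ^ (c - 1), c * 2 ^ (c - 1)], ![c - 1, 1], ?_,
      ?_, ?_, ?_, fun b w hb hw => ?_⟩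
    · refine Fin.strictMono_iff_lt_succ.2 fun i => ?_
      fin_cases i; simp; linarith
    · intro i; fin_cases i <;> constructor <;> simp <;> linarith
    · intro i; fin_cases i <;> simpa using hK
    · intro i; fin_cases i <;> constructor <;> simp <;> linarith
    · simpa using add_rpow_sub_rpow_sub_rpow_le hc.le hb hw
end

section
/- Let F(M) = K₀M - Σ_i(K_i M^{c_i} + Σ_j K_{ij} M^{t_{ij}}) with K₀, K_i, K_{ij} > 0 and all exponents c_i, t_{ij} > 1, and let m₀ > 0 be its unique positive zero. Then there exists δ > 0 such that for every C ∈ [0, δ], the solution set {M ≥ 0 : F(M) ≤ C} is contained in [0, (2/K₀)·C] ∪ [b_C, ∞) for some b_C > m₀/2; moreover the left endpoint a_C of the small-solution interval satisfies a_C → 0 and b_C → m₀ monotonically as C decreases to 0. -/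
open Filter Topology Set Asymptotics

/-! On `[0, ∞)`, `F M = K₀ M - G M` with `G` a sum of powers `M ^ p`, `p > 1`, so `F` is
concave, `F 0 = 0`, and `G M = o(M)` at `0⁺` gives some `s ∈ (0, m₀)` with `F s ≥ K₀ s / 2`.
The chords of `F` over `[0, s]` and `[s, m₀]` bound `F` from below, so `F M ≤ C` forces either
`M ≤ (s / F s) C ≤ (2 / K₀) C` or `M ≥ m₀ - ((m₀ - s) / F s) C`. Both endpoints are affine in
`C`, which gives the monotonicity and the limits; `δ` only has to keep the second endpoint
above `m₀ / 2`. -/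

theorem ConvexOn.sum {𝕜 E β ι : Type*} [Semiring 𝕜] [PartialOrder 𝕜] [AddCommMonoid E]
    [AddCommMonoid β] [PartialOrder β] [IsOrderedAddMonoid β] [SMul 𝕜 E] [Module 𝕜 β]
    {s : Set E} (hs : Convex 𝕜 s) (t : Finset ι) {f : ι → E → β}
    (hf : ∀ i ∈ t, ConvexOn 𝕜 s (f i)) : ConvexOn 𝕜 s fun x ↦ ∑ i ∈ t, f i x := by
  classical
  induction t using Finset.induction with
  | empty => simpa using convexOn_const (0 : β) hs
  | insert i t hi ih =>
    simp only [Finset.sum_insert hi]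
    exact (hf i (t.mem_insert_self i)).add (ih fun j hj ↦ hf j (Finset.mem_insert_of_mem hj))

theorem convexOn_const_mul_rpow {a p : ℝ} (ha : 0 ≤ a) (hp : 1 ≤ p) :
    ConvexOn ℝ (Ici 0) fun x : ℝ ↦ a * x ^ p := by
  simpa only [smul_eq_mul] using (convexOn_rpow hp).smul ha

theorem isLittleO_rpow_nhdsGT_zero {p : ℝ} (hp : 1 < p) :
    (fun x : ℝ ↦ x ^ p) =o[𝓝[>] 0] id := by
  have hsmall : (fun x : ℝ ↦ x ^ (p - 1)) =o[𝓝[>] 0] (fun _ ↦ (1 : ℝ)) := by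
    rw [isLittleO_one_iff]
    have h := (Real.continuousAt_rpow_const 0 (p - 1) (Or.inr (by linarith))).tendsto
    rw [Real.zero_rpow (by linarith)] at h
    exact h.mono_left nhdsWithin_le_nhds
  refine (hsmall.mul_isBigO (isBigO_refl id _)).congr' ?_ (.of_forall fun x ↦ one_mul x)
  filter_upwards [self_mem_nhdsWithin] with x (hx : 0 < x)
  rw [id, Real.rpow_sub_one hx.ne', div_mul_cancel₀ _ hx.ne']

theorem ConcaveOn.chord_le {f : ℝ → ℝ} {s : Set ℝ} (hf : ConcaveOn ℝ s f) {x y z : ℝ}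
    (hx : x ∈ s) (hz : z ∈ s) (hxy : x ≤ y) (hyz : y ≤ z) :
    (z - y) * f x + (y - x) * f z ≤ (z - x) * f y := by
  rcases hxy.eq_or_lt with rfl | hxy
  · linarith
  rcases hyz.eq_or_lt with rfl | hyz
  · linarith
  have := hf.neg.secant_mono_aux1 hx hz hxy hyz
  simp only [Pi.neg_apply] at this
  linarith

theorem ConcaveOn.sublevel_subset_Icc_union_Ici {F : ℝ → ℝ} (hF : ConcaveOn ℝ (Ici 0) F)
    (hF0 : 0 ≤ F 0) {s m C : ℝ} (hs : 0 < s) (hsm : s < m) (hFs : 0 < F s) (hFm : 0 ≤ F m)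
    (hC : 0 ≤ C) :
    {M | 0 ≤ M ∧ F M ≤ C} ⊆ Icc 0 (s / F s * C) ∪ Ici (m - (m - s) / F s * C) := by
  rintro M ⟨hM, hFM⟩
  rcases le_total M s with hMs | hsM
  · have hchord := hF.chord_le (mem_Ici.2 le_rfl) hs.le hM hMs
    have hF0_term : 0 ≤ (s - M) * F 0 := mul_nonneg (by linarith) hF0
    have hFM_term : s * F M ≤ s * C := mul_le_mul_of_nonneg_left hFM hs.le
    refine .inl ⟨hM, ?_⟩
    rw [div_mul_eq_mul_div, le_div_iff₀ hFs]
    linarith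
  refine .inr ?_
  rcases le_total m M with hmM | hMm
  · have hshift : 0 ≤ (m - s) / F s * C := by have := hsm.le; positivity
    exact le_trans (by linarith) hmM
  have hchord := hF.chord_le (mem_Ici.2 hs.le) (mem_Ici.2 (hs.trans hsm).le) hsM hMm
  have hFm_term : 0 ≤ (M - s) * F m := mul_nonneg (by linarith) hFm
  have hFM_term : (m - s) * F M ≤ (m - s) * C := mul_le_mul_of_nonneg_left hFM (by linarith)
  rw [mem_Ici, div_mul_eq_mul_div, sub_le_comm, le_div_iff₀ hFs]
  linarith

section NestedPowerSum

variable {ι : Type*} [Fintype ι] {κ : ι → Type*} [∀ i, Fintype (κ i)]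
  (K : ι → ℝ) (Kij : ∀ i, κ i → ℝ) (c : ι → ℝ) (t : ∀ i, κ i → ℝ)

noncomputable def nestedPowerSum (M : ℝ) : ℝ :=
  ∑ i, (K i * M ^ c i + ∑ j, Kij i j * M ^ t i j)

variable {K Kij c t}

theorem nestedPowerSum_zero (hc : ∀ i, c i ≠ 0) (ht : ∀ i j, t i j ≠ 0) :
    nestedPowerSum K Kij c t 0 = 0 := by
  simp [nestedPowerSum, Real.zero_rpow, hc, ht]

theorem convexOn_nestedPowerSum (hK : ∀ i, 0 ≤ K i) (hKij : ∀ i j, 0 ≤ Kij i j)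
    (hc : ∀ i, 1 ≤ c i) (ht : ∀ i j, 1 ≤ t i j) :
    ConvexOn ℝ (Ici 0) (nestedPowerSum K Kij c t) :=
  ConvexOn.sum (convex_Ici 0) _ fun i _ ↦ (convexOn_const_mul_rpow (hK i) (hc i)).add <|
    ConvexOn.sum (convex_Ici 0) _ fun j _ ↦ convexOn_const_mul_rpow (hKij i j) (ht i j)

theorem isLittleO_nestedPowerSum (hc : ∀ i, 1 < c i) (ht : ∀ i j, 1 < t i j) :
    nestedPowerSum K Kij c t =o[𝓝[>] 0] id :=
  IsLittleO.fun_sum fun i _ ↦ ((isLittleO_rpow_nhdsGT_zero (hc i)).const_mul_left (K i)).add <|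
    IsLittleO.fun_sum fun j _ ↦ (isLittleO_rpow_nhdsGT_zero (ht i j)).const_mul_left (Kij i j)

end NestedPowerSum

theorem stmt_10_general (N : ℕ) (J : Fin N → ℕ)
    (K₀ : ℝ) (hK₀ : 0 < K₀)
    (K : Fin N → ℝ) (hK : ∀ i, 0 < K i)
    (Kij : (i : Fin N) → Fin (J i) → ℝ) (hKij : ∀ i j, 0 < Kij i j)
    (c : Fin N → ℝ) (hc : ∀ i, 1 < c i)
    (t : (i : Fin N) → Fin (J i) → ℝ) (ht : ∀ i j, 1 < t i j)
    (F : ℝ → ℝ)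
    (hF : ∀ M : ℝ, 0 ≤ M →
      F M = K₀ * M - ∑ i, (K i * M ^ (c i) + ∑ j, Kij i j * M ^ (t i j)))
    (m₀ : ℝ) (hm₀ : 0 < m₀) (hFm₀ : F m₀ = 0) :
    ∃ δ : ℝ, 0 < δ ∧ ∃ a b : ℝ → ℝ,
      (∀ C ∈ Set.Icc (0 : ℝ) δ,
        {M : ℝ | 0 ≤ M ∧ F M ≤ C} ⊆ Set.Icc 0 (a C) ∪ Set.Ici (b C) ∧
        a C ≤ 2 / K₀ * C ∧ m₀ / 2 < b C) ∧
      MonotoneOn a (Set.Icc 0 δ) ∧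
      AntitoneOn b (Set.Icc 0 δ) ∧
      Tendsto a (nhdsWithin 0 (Set.Ioi 0)) (nhds 0) ∧
      Tendsto b (nhdsWithin 0 (Set.Ioi 0)) (nhds m₀) := by
  have hFG : ∀ M, 0 ≤ M → F M = K₀ * M - nestedPowerSum K Kij c t M := hF
  have hconc : ConcaveOn ℝ (Ici 0) F :=
    (((concaveOn_id (convex_Ici 0)).smul hK₀.le).sub <| convexOn_nestedPowerSum
      (fun i ↦ (hK i).le) (fun i j ↦ (hKij i j).le) (fun i ↦ (hc i).le)
      fun i j ↦ (ht i j).le).congr fun M hM ↦ (hFG M hM).symm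
  have hF0 : F 0 = 0 := by
    rw [hFG 0 le_rfl, nestedPowerSum_zero (fun i ↦ (one_pos.trans (hc i)).ne')
      fun i j ↦ (one_pos.trans (ht i j)).ne', mul_zero, sub_zero]
  obtain ⟨s, hGs, hs, hsm⟩ :=
    (((isLittleO_nestedPowerSum (K := K) (Kij := Kij) hc ht).def (half_pos hK₀)).and
      (Ioo_mem_nhdsGT hm₀)).exists
  have hFs : K₀ / 2 * s ≤ F s := by
    rw [Real.norm_eq_abs, Real.norm_eq_abs, id, abs_of_pos hs] at hGs
    rw [hFG s hs.le]
    linarith [le_abs_self (nestedPowerSum K Kij c t s)]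
  have hFs_pos : 0 < F s := by nlinarith
  set lam := (m₀ - s) / F s
  have hlam : 0 < lam := div_pos (by linarith) hFs_pos
  refine ⟨m₀ / (4 * lam), by positivity, fun C ↦ 2 / K₀ * C, fun C ↦ m₀ - lam * C,
    fun C ⟨hC, hCδ⟩ ↦ ⟨?_, le_rfl, ?_⟩, fun _ _ _ _ h ↦ by dsimp only; gcongr,
    fun _ _ _ _ h ↦ by dsimp only; gcongr, ?_, ?_⟩
  · refine (hconc.sublevel_subset_Icc_union_Ici hF0.ge hs hsm hFs_pos hFm₀.ge hC).trans <|
      union_subset_union_left _ <| Icc_subset_Icc_right <| mul_le_mul_of_nonneg_right ?_ hC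
    rw [div_le_div_iff₀ hFs_pos hK₀]
    linarith
  · rw [le_div_iff₀ (by positivity)] at hCδ
    linarith
  · exact ((continuous_const.mul continuous_id).tendsto' 0 0 (by simp)).mono_left
      nhdsWithin_le_nhds
  · exact ((continuous_const.sub (continuous_const.mul continuous_id)).tendsto' 0 m₀
      (by simp)).mono_left nhdsWithin_le_nhds

/-- Let `F M = K₀·M - ∑ i (K i · M^(c i) + ∑ j, Kij i j · M^(t i j))` with positive
coefficients and exponents `> 1`, and let `m₀ > 0` be its unique positive zero. Then
there exists `δ > 0` and endpoint functions `a, b` such that for every `C ∈ [0, δ]`,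
`{M ≥ 0 : F M ≤ C} ⊆ [0, a C] ∪ [b C, ∞)` with `a C ≤ (2/K₀)·C` and `b C > m₀/2`;
moreover `a` is monotone, `b` is antitone on `[0, δ]`, and `a C → 0`, `b C → m₀` as
`C ↓ 0`. -/
theorem stmt_10 (N : ℕ) (hN : 1 ≤ N) (J : Fin N → ℕ)
    (K₀ : ℝ) (hK₀ : 0 < K₀)
    (K : Fin N → ℝ) (hK : ∀ i, 0 < K i)
    (Kij : (i : Fin N) → Fin (J i) → ℝ) (hKij : ∀ i j, 0 < Kij i j)
    (c : Fin N → ℝ) (hc : ∀ i, 1 < c i)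
    (t : (i : Fin N) → Fin (J i) → ℝ) (ht : ∀ i j, 1 < t i j)
    (F : ℝ → ℝ)
    (hF : ∀ M : ℝ, 0 ≤ M →
      F M = K₀ * M - ∑ i, (K i * M ^ (c i) + ∑ j, Kij i j * M ^ (t i j)))
    (m₀ : ℝ) (hm₀ : 0 < m₀) (hFm₀ : F m₀ = 0)
    (huniq : ∀ M : ℝ, 0 < M → F M = 0 → M = m₀) :
    ∃ δ : ℝ, 0 < δ ∧ ∃ a b : ℝ → ℝ,
      (∀ C ∈ Set.Icc (0 : ℝ) δ,
        {M : ℝ | 0 ≤ M ∧ F M ≤ C} ⊆ Set.Icc 0 (a C) ∪ Set.Ici (b C) ∧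
        a C ≤ 2 / K₀ * C ∧ m₀ / 2 < b C) ∧
      MonotoneOn a (Set.Icc 0 δ) ∧
      AntitoneOn b (Set.Icc 0 δ) ∧
      Tendsto a (nhdsWithin 0 (Set.Ioi 0)) (nhds 0) ∧
      Tendsto b (nhdsWithin 0 (Set.Ioi 0)) (nhds m₀) :=
  stmt_10_general N J K₀ hK₀ K hK Kij hKij c hc t ht F hF m₀ hm₀ hFm₀
end
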